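/- arXiv:2305.06093 — 3 statements merged into one kernel-verified Lean document; each statement's English description precedes it below -/
import Mathlib

section
/- Let A be a nonempty closed class of decision tables over E_k on which the function S is not bounded from above. Then G_{h,A}(n) = n for every n ∈ ω, i.e., for each n there exists a table T* ∈ A with at most n columns whose minimum strongly nondeterministic decision tree depth equals n, and no table with at most n columns requires more. -/
/- Decision tables over E_{k+2} = {0, ..., k+1}, following Ostonov & Moshkov,
"Deterministic and Strongly Nondeterministic Decision Trees for Decision Tables
from Closed Classes".  Columns are labeled with attributes (natural numbers),
rows are functions supported on the attribute set, decisions are Booleans. -/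

namespace ClosedClasses

/-- A decision table with 0-1-decisions over `E_{k+2}`. Rows are pairwise
different (they form a `Finset`) and vanish outside the attribute set. -/
structure Table (k : ℕ) where
  attrs : Finset ℕ
  rows : Finset (ℕ → Fin (k + 2))
  dec : (ℕ → Fin (k + 2)) → Bool
  supp : ∀ r ∈ rows, ∀ a ∉ attrs, r a = 0

namespace Table

variable {k : ℕ}

/-- Number of columns. -/
def W (T : Table k) : ℕ := T.attrs.card

/-- Number of rows. -/
def N (T : Table k) : ℕ := T.rows.card

/-- All rows carry the same decision. -/
def ConstDec (T : Table k) : Prop :=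
  ∀ r ∈ T.rows, ∀ r' ∈ T.rows, T.dec r = T.dec r'

/-- `D` separates the row `r` from all other rows of `T`. -/
def Separates (T : Table k) (D : Finset ℕ) (r : ℕ → Fin (k + 2)) : Prop :=
  D ⊆ T.attrs ∧ ∀ r' ∈ T.rows, r' ≠ r → ∃ a ∈ D, r a ≠ r' a

/-- `S(T, r)`: minimum cardinality of a separating set for row `r`. -/
noncomputable def Srow (T : Table k) (r : ℕ → Fin (k + 2)) : ℕ :=
  sInf {m | ∃ D : Finset ℕ, T.Separates D r ∧ D.card = m}

/-- `S(T)`: maximum over rows of `S(T, r)`. -/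
noncomputable def S (T : Table k) : ℕ :=
  sSup {m | ∃ r ∈ T.rows, T.Srow r = m}

/-- A test of `T`: a set of columns distinguishing rows with different decisions. -/
def IsTest (T : Table k) (D : Finset ℕ) : Prop :=
  D ⊆ T.attrs ∧
    ∀ r ∈ T.rows, ∀ r' ∈ T.rows, T.dec r ≠ T.dec r' → ∃ a ∈ D, r a ≠ r' a

/-- `Θ(T)`: minimum cardinality of a test of `T`. -/
noncomputable def theta (T : Table k) : ℕ :=
  sInf {m | ∃ D : Finset ℕ, T.IsTest D ∧ D.card = m}

end Table

/-- `(k+2)`-decision trees: leaves carry decisions, internal nodes query an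
attribute and branch on its `k+2` possible values. -/
inductive DT (k : ℕ) where
  | leaf : Bool → DT k
  | node : ℕ → (Fin (k + 2) → DT k) → DT k

namespace DT

variable {k : ℕ}

/-- Deterministic evaluation of a tree on a row. -/
def eval : DT k → (ℕ → Fin (k + 2)) → Bool
  | leaf b, _ => b
  | node a ch, r => eval (ch (r a)) r

/-- Depth: maximum number of queries along a complete path. -/
def depth : DT k → ℕ
  | leaf _ => 0
  | node _ ch => 1 + Finset.univ.sup fun i => (ch i).depth

/-- The set `P(Γ)` of attributes queried in the tree. -/
def attrSet : DT k → Finset ℕ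
  | leaf _ => ∅
  | node a ch => insert a (Finset.univ.biUnion fun i => (ch i).attrSet)

/-- `ψ`-cost: maximum over complete paths of `ψ` of the word of queried
attributes (the accumulator `w` holds attributes already queried). -/
def cost (ψ : List ℕ → ℕ) : DT k → List ℕ → ℕ
  | leaf _, w => ψ w
  | node a ch, w => Finset.univ.sup fun i => cost ψ (ch i) (a :: w)

end DT

/-- `Γ` is a deterministic decision tree for the table `T`. -/
def IsDT {k : ℕ} (T : Table k) (Γ : DT k) : Prop :=
  Γ.attrSet ⊆ T.attrs ∧ ∀ r ∈ T.rows, Γ.eval r = T.dec r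

/-- `h^d(T)`: minimum depth of a deterministic decision tree for `T`. -/
noncomputable def hd {k : ℕ} (T : Table k) : ℕ :=
  sInf {m | ∃ Γ : DT k, IsDT T Γ ∧ Γ.depth = m}

/-- `ψ^d(T)`: minimum `ψ`-complexity of a deterministic decision tree for `T`. -/
noncomputable def psid {k : ℕ} (ψ : List ℕ → ℕ) (T : Table k) : ℕ :=
  sInf {m | ∃ Γ : DT k, IsDT T Γ ∧ Γ.cost ψ [] = m}

/-- A row satisfies a rule (a conjunction of equations `attribute = value`). -/
def RuleSat {k : ℕ} (rule : List (ℕ × Fin (k + 2))) (r : ℕ → Fin (k + 2)) : Prop :=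
  ∀ p ∈ rule, r p.1 = p.2

/-- A strongly nondeterministic decision tree for `T`, represented by the set of
words of its complete paths (rules): every rule uses attributes of `T`, each
row with decision 1 satisfies some rule, and each rule is consistent only with
rows carrying decision 1. -/
def IsSNDT {k : ℕ} (T : Table k) (R : Finset (List (ℕ × Fin (k + 2)))) : Prop :=
  (∀ rule ∈ R, ∀ p ∈ rule, p.1 ∈ T.attrs) ∧
  (∀ r ∈ T.rows, T.dec r = true → ∃ rule ∈ R, RuleSat rule r) ∧
  (∀ rule ∈ R, ∀ r ∈ T.rows, RuleSat rule r → T.dec r = true)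

/-- `ψ^s(T)`: minimum `ψ`-complexity of a strongly nondeterministic decision
tree for `T`. -/
noncomputable def psis {k : ℕ} (ψ : List ℕ → ℕ) (T : Table k) : ℕ :=
  sInf {m | ∃ R, IsSNDT T R ∧ R.sup (fun rule => ψ (rule.map Prod.fst)) = m}

/-- `h^s(T)`: minimum depth of a strongly nondeterministic decision tree. -/
noncomputable def hs {k : ℕ} (T : Table k) : ℕ :=
  sInf {m | ∃ R, IsSNDT T R ∧ R.sup (fun rule => (rule.map Prod.fst).length) = m}

/-- A complexity measure on finite words over the alphabet `{f_i : i ∈ ω}`. -/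
structure CMeasure where
  ψ : List ℕ → ℕ
  pos : ∀ w, ψ w = 0 ↔ w = []
  perm : ∀ w w' : List ℕ, w.Perm w' → ψ w = ψ w'
  mono : ∀ w₁ w₂ : List ℕ, ψ w₁ ≤ ψ (w₁ ++ w₂)
  subadd : ∀ w₁ w₂ : List ℕ, ψ (w₁ ++ w₂) ≤ ψ w₁ + ψ w₂

/-- Bounded complexity measure: `ψ(α) ≥ |α|`. -/
def CMeasure.Bounded (ψ : CMeasure) : Prop := ∀ w : List ℕ, w.length ≤ ψ.ψ w

/-- Extension of a complexity measure to finite sets of attributes. -/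
def CMeasure.setCost (ψ : CMeasure) (D : Finset ℕ) : ℕ := ψ.ψ (D.sort (· ≤ ·))

namespace Table

variable {k : ℕ}

/-- `S_ψ(T, r)`: minimum `ψ`-complexity of a set separating `r` from the other rows. -/
noncomputable def Spsirow (ψ : CMeasure) (T : Table k) (r : ℕ → Fin (k + 2)) : ℕ :=
  sInf {m | ∃ D : Finset ℕ, T.Separates D r ∧ ψ.setCost D = m}

/-- `S_ψ(T)`: maximum over rows of `S_ψ(T, r)`. -/
noncomputable def Spsi (ψ : CMeasure) (T : Table k) : ℕ :=
  sSup {m | ∃ r ∈ T.rows, Spsirow ψ T r = m}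

/-- `Θ_ψ(T)`: minimum `ψ`-complexity of a test of `T`. -/
noncomputable def thetapsi (ψ : CMeasure) (T : Table k) : ℕ :=
  sInf {m | ∃ D : Finset ℕ, T.IsTest D ∧ ψ.setCost D = m}

/-- `W_ψ(T) = ψ(P(T))`. -/
def Wpsi (ψ : CMeasure) (T : Table k) : ℕ := ψ.setCost T.attrs

/-- `V_ψ(T) = max{ψ(f_i) : f_i ∈ P(T)}`. -/
noncomputable def Vpsi (ψ : CMeasure) (T : Table k) : ℕ :=
  sSup {m | ∃ a ∈ T.attrs, ψ.ψ [a] = m}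

end Table

/-- Restriction of a row to a set of attributes. -/
def restrict {k : ℕ} (A : Finset ℕ) (r : ℕ → Fin (k + 2)) : ℕ → Fin (k + 2) :=
  fun a => if a ∈ A then r a else 0

/-- `T'` belongs to the closure `[T]` of `T` under removal of columns and
changing of decisions: `T'` keeps a subset of the columns of `T`, its rows are
the restrictions of the rows of `T`, and its decisions are arbitrary. -/
def InClosure {k : ℕ} (T' T : Table k) : Prop :=
  T'.attrs ⊆ T.attrs ∧ (T'.rows : Set (ℕ → Fin (k + 2))) = restrict T'.attrs '' (T.rows : Set (ℕ → Fin (k + 2)))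

/-- A nonempty class of decision tables closed under removal of columns and
changing of decisions. -/
def ClosedClass {k : ℕ} (A : Set (Table k)) : Prop :=
  A.Nonempty ∧ ∀ T ∈ A, ∀ T' : Table k, InClosure T' T → T' ∈ A

/-- `Ŝ_ψ(T) = max{S_ψ(T') : T' ∈ [T]}`. -/
noncomputable def Shatpsi {k : ℕ} (ψ : CMeasure) (T : Table k) : ℕ :=
  sSup {m | ∃ T' : Table k, InClosure T' T ∧ T'.Spsi ψ = m}

/-- `Ŝ(T) = max{S(T') : T' ∈ [T]}`. -/
noncomputable def Shat {k : ℕ} (T : Table k) : ℕ :=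
  sSup {m | ∃ T' : Table k, InClosure T' T ∧ T'.S = m}

/-- Fixing the attributes of the word `p` to the listed values restricts `T`
to a subtable (possibly empty) in which all rows carry the same decision. -/
def FixConst {k : ℕ} (T : Table k) (p : List (ℕ × Fin (k + 2))) : Prop :=
  ∀ r ∈ T.rows, ∀ r' ∈ T.rows, RuleSat p r → RuleSat p r' → T.dec r = T.dec r'

/-- `M_ψ(T, δ)`: minimum `ψ`-value of a word of attributes of `T` whose
fixation to the values of `δ` yields a subtable with constant decisions. -/
noncomputable def Mpsirow {k : ℕ} (ψ : CMeasure) (T : Table k)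
    (δ : ℕ → Fin (k + 2)) : ℕ :=
  sInf {m | ∃ p : List (ℕ × Fin (k + 2)),
    (∀ q ∈ p, q.1 ∈ T.attrs ∧ q.2 = δ q.1) ∧ FixConst T p ∧
      ψ.ψ (p.map Prod.fst) = m}

/-- `M_ψ(T)`: maximum of `M_ψ(T, δ)` over all tuples `δ ∈ E_{k+2}^{W(T)}`. -/
noncomputable def Mpsi {k : ℕ} (ψ : CMeasure) (T : Table k) : ℕ :=
  sSup {m | ∃ δ : ℕ → Fin (k + 2), (∀ a ∉ T.attrs, δ a = 0) ∧ Mpsirow ψ T δ = m}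

/-- A critical table: for every column there are two rows differing exactly
in this column. -/
def Critical {k : ℕ} (T : Table k) : Prop :=
  T.rows.Nonempty ∧ ∀ a ∈ T.attrs, ∃ r ∈ T.rows, ∃ r' ∈ T.rows,
    r a ≠ r' a ∧ ∀ b : ℕ, b ≠ a → r b = r' b

/-- `H_D(n)`: the largest element of `D` not exceeding `n` (0 if none). -/
noncomputable def HD (D : Set ℕ) (n : ℕ) : ℕ := sSup (D ∩ Set.Iic n)

end ClosedClasses

open ClosedClasses

open ClosedClasses in
lemma exists_SNDT_attrs {k : ℕ} (T : Table k) :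
    ∃ R, IsSNDT T R ∧ R.sup (fun rule => (rule.map Prod.fst).length) ≤ T.W := by
  classical
  refine ⟨(T.rows.filter (fun r => T.dec r = true)).image
    (fun r => (T.attrs.sort (· ≤ ·)).map (fun a => (a, r a))), ?_, ?_⟩
  · refine ⟨?_, ?_, ?_⟩
    · intro rule hrule p hp
      simp only [Finset.mem_image, Finset.mem_filter] at hrule
      obtain ⟨r, hr, rfl⟩ := hrule
      simp only [List.mem_map] at hp
      obtain ⟨a, ha, rfl⟩ := hp
      exact Finset.mem_sort (α := ℕ) (· ≤ ·) |>.mp ha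
    · intro r hr hdec
      refine ⟨(T.attrs.sort (· ≤ ·)).map (fun a => (a, r a)), ?_, ?_⟩
      · simp only [Finset.mem_image, Finset.mem_filter]
        exact ⟨r, ⟨hr, hdec⟩, rfl⟩
      · intro p hp
        simp only [List.mem_map] at hp
        obtain ⟨a, ha, rfl⟩ := hp
        rfl
    · intro rule hrule r' hr' hsat
      simp only [Finset.mem_image, Finset.mem_filter] at hrule
      obtain ⟨r, ⟨hr, hdec⟩, rfl⟩ := hrule
      have heq : r' = r := by
        funext a
        by_cases ha : a ∈ T.attrs
        · have := hsat (a, r a) (by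
            simp only [List.mem_map]
            exact ⟨a, (Finset.mem_sort (α := ℕ) (· ≤ ·)).mpr ha, rfl⟩)
          exact this
        · rw [T.supp r hr a ha, T.supp r' hr' a ha]
      rw [heq, hdec]
  · apply Finset.sup_le
    intro rule hrule
    simp only [Finset.mem_image, Finset.mem_filter] at hrule
    obtain ⟨r, hr, rfl⟩ := hrule
    simp [Table.W, Finset.length_sort]

open ClosedClasses in
lemma hs_le_W {k : ℕ} (T : Table k) : hs T ≤ T.W := by
  obtain ⟨R, hR, hle⟩ := exists_SNDT_attrs T
  exact le_trans (Nat.sInf_le ⟨R, hR, rfl⟩) hle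

/-- Theorem 8: if `S` is unbounded on a nonempty closed class
`A`, then `G_{h,A}(n) = n` for every `n`: some `T* ∈ A` with at most `n`
columns has minimum strongly nondeterministic decision tree depth equal to
`n`, and no table of `A` with at most `n` columns requires more. -/
theorem G_h_eq_n (k : ℕ) (A : Set (Table k)) (hA : ClosedClass A)
    (hS : ∀ m : ℕ, ∃ T ∈ A, m ≤ T.S) :
    ∀ n : ℕ,
      (∃ T' ∈ A, T'.W ≤ n ∧ hs T' = n) ∧
      (∀ T ∈ A, T.W ≤ n → hs T ≤ n) := by
  intro n
  classical
  have hupper : ∀ T ∈ A, T.W ≤ n → hs T ≤ n := fun T _ hW => le_trans (hs_le_W T) hW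
  refine ⟨?_, hupper⟩
  -- existence of a hard table
  obtain ⟨T, hTA, hTS⟩ := hS (max n 1)
  -- find a row with Srow ≥ n
  have hset : {m | ∃ r ∈ T.rows, T.Srow r = m}.Nonempty := by
    by_contra h
    rw [Set.not_nonempty_iff_eq_empty] at h
    have hz : T.S = 0 := by rw [Table.S, h, csSup_empty]; rfl
    have := le_trans (le_max_right n 1) hTS
    omega
  have hfin : {m | ∃ r ∈ T.rows, T.Srow r = m}.Finite := by
    have : {m | ∃ r ∈ T.rows, T.Srow r = m} = T.Srow '' ↑T.rows := by
      ext m; simp [eq_comm, Set.mem_image]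
    rw [this]
    exact T.rows.finite_toSet.image _
  obtain ⟨r, hr, hSr⟩ := hset.csSup_mem hfin
  have hSrn : n ≤ T.Srow r := by
    rw [hSr]; exact le_trans (le_max_left n 1) hTS
  -- attrs separates r
  have hattrs_sep : T.Separates T.attrs r := by
    refine ⟨Finset.Subset.refl _, ?_⟩
    intro r' hr' hne
    by_contra h
    push_neg at h
    apply hne
    funext a
    by_cases ha : a ∈ T.attrs
    · exact (h a ha).symm
    · rw [T.supp r hr a ha, T.supp r' hr' a ha]
  have hsep_ne : {m | ∃ D : Finset ℕ, T.Separates D r ∧ D.card = m}.Nonempty :=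
    ⟨T.attrs.card, T.attrs, hattrs_sep, rfl⟩
  obtain ⟨D, hDsep, hDcard⟩ := Nat.sInf_mem hsep_ne
  have hDcard' : D.card = T.Srow r := hDcard
  have hDn : n ≤ D.card := by rw [hDcard]; exact hSrn
  -- minimality: erasing any column breaks separation
  have hwit : ∀ a ∈ D, ∃ ra ∈ T.rows, r a ≠ ra a ∧ ∀ b ∈ D, b ≠ a → r b = ra b := by
    intro a ha
    have herase : ¬ T.Separates (D.erase a) r := by
      intro hsep
      have h1 : T.Srow r ≤ (D.erase a).card := Nat.sInf_le ⟨_, hsep, rfl⟩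
      rw [Finset.card_erase_of_mem ha] at h1
      have h2 : 1 ≤ D.card := Finset.card_pos.mpr ⟨a, ha⟩
      have h1' : T.Srow r ≤ D.card - 1 := h1
      omega
    rw [Table.Separates] at herase
    push_neg at herase
    have hsub : D.erase a ⊆ T.attrs := (Finset.erase_subset a D).trans hDsep.1
    obtain ⟨r', hr', hne', hagree⟩ := herase hsub
    obtain ⟨b, hbD, hbne⟩ := hDsep.2 r' hr' hne'
    have hba : b = a := by
      by_contra hba
      exact hbne (hagree b (Finset.mem_erase.mpr ⟨hba, hbD⟩))
    refine ⟨r', hr', by rwa [hba] at hbne, ?_⟩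
    intro b' hb' hb'a
    exact hagree b' (Finset.mem_erase.mpr ⟨hb'a, hb'⟩)
  -- pick a subset of size n
  obtain ⟨D', hD'sub, hD'card⟩ := Finset.exists_subset_card_eq hDn
  -- build the critical table
  have hsupp : ∀ x ∈ T.rows.image (restrict D'), ∀ a ∉ D', x a = 0 := by
    intro x hx a ha
    obtain ⟨y, _, rfl⟩ := Finset.mem_image.mp hx
    simp [restrict, ha]
  set Tstar : Table k :=
    ⟨D', T.rows.image (restrict D'), fun x => decide (x = restrict D' r), hsupp⟩
    with hTstar
  refine ⟨Tstar, ?_, ?_, ?_⟩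
  · exact hA.2 T hTA _ ⟨hD'sub.trans hDsep.1, by simp [Tstar, Finset.coe_image]⟩
  · simpa [Table.W, Tstar] using le_of_eq hD'card
  · have hWeq : Tstar.W = n := by simpa [Table.W, Tstar] using hD'card
    have hle : hs Tstar ≤ n := le_trans (hs_le_W Tstar) (le_of_eq hWeq)
    refine le_antisymm hle ?_
    -- lower bound
    have hne' : {m | ∃ R, IsSNDT Tstar R ∧
        R.sup (fun rule => (rule.map Prod.fst).length) = m}.Nonempty := by
      obtain ⟨R, hR, _⟩ := exists_SNDT_attrs Tstar
      exact ⟨_, R, hR, rfl⟩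
    refine le_csInf hne' ?_
    rintro m ⟨R, hR, rfl⟩
    have hrstar : restrict D' r ∈ Tstar.rows := Finset.mem_image.mpr ⟨r, hr, rfl⟩
    have hdec1 : Tstar.dec (restrict D' r) = true := by simp [Tstar]
    obtain ⟨rule, hrule, hsat⟩ := hR.2.1 _ hrstar hdec1
    have hclaim : D' ⊆ (rule.map Prod.fst).toFinset := by
      intro a haD'
      by_contra hna
      obtain ⟨ra, hra, hranea, hragree⟩ := hwit a (hD'sub haD')
      have hxmem : restrict D' ra ∈ Tstar.rows := Finset.mem_image.mpr ⟨ra, hra, rfl⟩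
      have hsat' : RuleSat rule (restrict D' ra) := by
        intro p hp
        have hp1 : p.1 ∈ D' := hR.1 rule hrule p hp
        have hpa : p.1 ≠ a := by
          intro h
          exact hna (List.mem_toFinset.mpr (List.mem_map.mpr ⟨p, hp, h⟩))
        have hps := hsat p hp
        have h1 : restrict D' ra p.1 = ra p.1 := by simp [restrict, hp1]
        have h2 : ra p.1 = r p.1 := (hragree p.1 (hD'sub hp1) hpa).symm
        have h3 : restrict D' r p.1 = r p.1 := by simp [restrict, hp1]
        rw [h1, h2, ← h3]
        exact hps
      have hdx := hR.2.2 rule hrule _ hxmem hsat'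
      have heq : restrict D' ra = restrict D' r := by
        simpa [Tstar] using hdx
      have : ra a = r a := by
        have := congrFun heq a
        simpa [restrict, haD'] using this
      exact hranea this.symm
    calc n = D'.card := hD'card.symm
      _ ≤ (rule.map Prod.fst).toFinset.card := Finset.card_le_card hclaim
      _ ≤ (rule.map Prod.fst).length := (rule.map Prod.fst).toFinset_card_le
      _ ≤ R.sup (fun rule => (rule.map Prod.fst).length) :=
        Finset.le_sup (f := fun rule => (rule.map Prod.fst).length) hrule
end

section
/- For every nondecreasing function φ: ω → ω with φ(0) = 0 and φ(n) ≥ n for all n, there exist a bounded complexity measure ψ and a nonempty closed class A of decision tables over E_2 such that F_{ψ,A}(n) = max{ψ^d(T) : T ∈ A, ψ^s(T) ≤ n} is defined and equals φ(n) for every n ∈ ω. -/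
open ClosedClasses

/-! The table `T_m` has a fresh block of `⌈φ m / m⌉` columns whose weights are at most `m` and sum
to `φ m`; its rows are the zero row (decision `0`) and the unit rows `e_a` (decision `1`). The
one-letter rules `a = 1` give `ψ^s(T_m) ≤ m`, while a deterministic tree must query every column
on the path of the zero row, so `ψ^d(T_m) = φ m`.

Every table in the closure of the `T_m` again consists of the zero row and unit rows, and its
`ψ^d` is exactly the cost of the columns `a` at which `e_a` and the zero row get different
decisions. Let `ψ^s ≤ n`. For `m ≤ n` simply `ψ^d ≤ φ m ≤ φ n`. For `n < m`: if the zero row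
has decision `1`, a rule certifying it must query all of these columns, so they cost at most `n`;
if it has decision `0`, each of these columns is queried by a rule certifying its unit row, so
its weight is at most `n < m` and it is the single light column of the block. Either way
`ψ^d ≤ n ≤ φ n`. -/

namespace ClosedClasses

namespace CMeasure

variable (ψ : CMeasure)

theorem le_of_subperm {w w' : List ℕ} (h : w.Subperm w') : ψ.ψ w ≤ ψ.ψ w' := by
  obtain ⟨l, hl, hsub⟩ := h
  obtain ⟨rest, hrest⟩ := hsub.exists_perm_append
  rw [ψ.perm _ _ hl.symm, ψ.perm _ _ hrest]
  exact ψ.mono _ _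

theorem setCost_le_of_subset {D : Finset ℕ} {w : List ℕ} (h : ∀ a ∈ D, a ∈ w) :
    ψ.setCost D ≤ ψ.ψ w :=
  ψ.le_of_subperm <| List.subperm_of_subset (Finset.sort_nodup _ _)
    fun a ha => h a ((Finset.mem_sort _).1 ha)

theorem setCost_mono {D D' : Finset ℕ} (h : D ⊆ D') : ψ.setCost D ≤ ψ.setCost D' :=
  ψ.setCost_le_of_subset fun _ ha => (Finset.mem_sort _).2 (h ha)

@[simp]
theorem setCost_empty : ψ.setCost ∅ = 0 := by
  simp [setCost, ψ.pos]

@[simp]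
theorem setCost_singleton (a : ℕ) : ψ.setCost {a} = ψ.ψ [a] := by
  simp [setCost]

def ofWeights (w : ℕ → ℕ) (hw : ∀ a, 0 < w a) : CMeasure where
  ψ l := (l.map w).sum
  pos l := by
    cases l with
    | nil => simp
    | cons a l =>
      simp only [List.map_cons, List.sum_cons, reduceCtorEq, iff_false]
      have := hw a
      omega
  perm _ _ h := (h.map w).sum_eq
  mono _ _ := by simp
  subadd _ _ := by simp

theorem ofWeights_bounded (w : ℕ → ℕ) (hw : ∀ a, 0 < w a) : (ofWeights w hw).Bounded := by
  intro l
  simpa [ofWeights] using List.length_le_sum_of_one_le (l.map w) fun _ hx => by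
    obtain ⟨a, -, rfl⟩ := List.mem_map.1 hx; exact hw a

@[simp]
theorem ofWeights_singleton (w : ℕ → ℕ) (hw : ∀ a, 0 < w a) (a : ℕ) :
    (ofWeights w hw).ψ [a] = w a := by
  simp [ofWeights]

theorem setCost_ofWeights (w : ℕ → ℕ) (hw : ∀ a, 0 < w a) (D : Finset ℕ) :
    (ofWeights w hw).setCost D = ∑ a ∈ D, w a :=
  ((Finset.sort_perm_toList _ _).map w).sum_eq.trans (Finset.sum_map_toList D w)

end CMeasure

noncomputable section

open scoped Classical

variable {k : ℕ}

def unitRows (C : Finset ℕ) : Finset (ℕ → Fin (k + 2)) :=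
  insert 0 (C.image fun a => Pi.single a 1)

theorem mem_unitRows {C : Finset ℕ} {r : ℕ → Fin (k + 2)} :
    r ∈ unitRows C ↔ r = 0 ∨ ∃ a ∈ C, r = Pi.single a 1 := by
  simp [unitRows, eq_comm (a := r)]

theorem zero_mem_unitRows (C : Finset ℕ) : (0 : ℕ → Fin (k + 2)) ∈ unitRows C :=
  mem_unitRows.2 (Or.inl rfl)

theorem single_one_mem_unitRows {C : Finset ℕ} {a : ℕ} (ha : a ∈ C) :
    (Pi.single a 1 : ℕ → Fin (k + 2)) ∈ unitRows C :=
  mem_unitRows.2 (Or.inr ⟨a, ha, rfl⟩)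

def unitTable (C : Finset ℕ) : Table k where
  attrs := C
  rows := unitRows C
  dec r := decide (r ≠ 0)
  supp r hr a ha := by
    obtain rfl | ⟨b, hb, rfl⟩ := mem_unitRows.1 hr
    · rfl
    · exact Pi.single_eq_of_ne (by rintro rfl; exact ha hb) _

theorem inClosure_refl (T : Table k) : InClosure T T := by
  refine ⟨subset_rfl, ((Set.image_congr fun r hr => ?_).trans (Set.image_id _)).symm⟩
  ext a
  by_cases ha : a ∈ T.attrs
  · simp [restrict, ha]
  · simp [restrict, ha, T.supp r hr a ha]

theorem restrict_restrict {B B' : Finset ℕ} (h : B ⊆ B') (r : ℕ → Fin (k + 2)) :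
    restrict B (restrict B' r) = restrict B r := by
  ext a
  by_cases ha : a ∈ B
  · simp [restrict, ha, h ha]
  · simp [restrict, ha]

theorem InClosure.trans {T'' T' T : Table k} (h₁ : InClosure T'' T') (h₂ : InClosure T' T) :
    InClosure T'' T := by
  refine ⟨h₁.1.trans h₂.1, ?_⟩
  rw [h₁.2, h₂.2, Set.image_image]
  exact Set.image_congr fun r _ => restrict_restrict h₁.1 r

theorem restrict_single_one (B : Finset ℕ) (a : ℕ) :
    restrict B (Pi.single a 1 : ℕ → Fin (k + 2)) = if a ∈ B then Pi.single a 1 else 0 := by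
  ext b
  by_cases hab : b = a
  · subst hab; by_cases hb : b ∈ B <;> simp [restrict, hb]
  · by_cases hb : b ∈ B <;> by_cases ha : a ∈ B <;> simp [restrict, hb, ha, hab]

theorem InClosure.rows_eq_unitRows {T T' : Table k} (h : InClosure T T')
    (hT' : T'.rows = unitRows T'.attrs) : T.rows = unitRows T.attrs := by
  have hrows := h.2
  rw [hT'] at hrows
  ext r
  rw [← Finset.mem_coe, hrows, mem_unitRows]
  constructor
  · rintro ⟨r, hr, rfl⟩
    obtain rfl | ⟨a, -, rfl⟩ := mem_unitRows.1 hr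
    · exact Or.inl (by ext; simp [restrict])
    · rw [restrict_single_one]
      split_ifs with ha
      exacts [Or.inr ⟨a, ha, rfl⟩, Or.inl rfl]
  · rintro (rfl | ⟨a, ha, rfl⟩)
    · exact ⟨0, mem_unitRows.2 (Or.inl rfl), by ext; simp [restrict]⟩
    · exact ⟨Pi.single a 1, mem_unitRows.2 (Or.inr ⟨a, h.1 ha, rfl⟩),
        by rw [restrict_single_one, if_pos ha]⟩

def Table.sensitiveAttrs (T : Table k) : Finset ℕ :=
  T.attrs.filter fun a => T.dec (Pi.single a 1) ≠ T.dec 0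

@[simp]
theorem sensitiveAttrs_unitTable (C : Finset ℕ) : (unitTable (k := k) C).sensitiveAttrs = C :=
  Finset.filter_true_of_mem fun a _ => by simp [unitTable]

namespace DT

def chain (d : Bool) (f : ℕ → Bool) : List ℕ → DT k
  | [] => leaf d
  | a :: l => node a fun v => if v = 0 then chain d f l else leaf (f a)

def path : DT k → (ℕ → Fin (k + 2)) → List ℕ
  | leaf _, _ => []
  | node a ch, r => a :: path (ch (r a)) r

variable (d : Bool) (f : ℕ → Bool)

theorem eval_chain_zero (l : List ℕ) : (chain d f l).eval (0 : ℕ → Fin (k + 2)) = d := by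
  induction l with
  | nil => rfl
  | cons a l ih => simpa [chain, eval] using ih

theorem eval_chain_single_one (l : List ℕ) (b : ℕ) :
    (chain d f l).eval (Pi.single b 1 : ℕ → Fin (k + 2)) = if b ∈ l then f b else d := by
  induction l with
  | nil => rfl
  | cons a l ih =>
    by_cases hab : a = b
    · subst hab; simp [chain, eval]
    · simp [chain, eval, ih, Ne.symm hab]

theorem attrSet_chain_subset (l : List ℕ) : (chain (k := k) d f l).attrSet ⊆ l.toFinset := by
  induction l with
  | nil => simp [chain, attrSet]
  | cons a l ih =>
    intro x hx
    simp only [chain, attrSet, Finset.mem_insert, Finset.mem_biUnion, Finset.mem_univ,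
      true_and] at hx
    obtain rfl | ⟨v, hv⟩ := hx
    · simp
    · split_ifs at hv
      · simpa using Or.inr (ih hv)
      · simp [attrSet] at hv

theorem cost_chain_le (ψ : CMeasure) (l w : List ℕ) :
    (chain (k := k) d f l).cost ψ.ψ w ≤ ψ.ψ (l ++ w) := by
  induction l generalizing w with
  | nil => exact le_rfl
  | cons a l ih =>
    refine Finset.sup_le fun v _ => ?_
    dsimp only
    split_ifs
    · exact (ih (a :: w)).trans (ψ.perm _ _ List.perm_middle).le
    · exact ψ.le_of_subperm ((List.sublist_append_right l (a :: w)).subperm.trans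
        (List.perm_middle.subperm))

theorem le_cost_path (ψ : CMeasure) (Γ : DT k) (r : ℕ → Fin (k + 2)) (w : List ℕ) :
    ψ.ψ (Γ.path r ++ w) ≤ Γ.cost ψ.ψ w := by
  induction Γ generalizing w with
  | leaf => exact le_rfl
  | node a ch ih =>
    calc ψ.ψ (path (node a ch) r ++ w) = ψ.ψ (path (ch (r a)) r ++ a :: w) :=
          ψ.perm _ _ List.perm_middle.symm
      _ ≤ (ch (r a)).cost ψ.ψ (a :: w) := ih _ _
      _ ≤ (node a ch).cost ψ.ψ w :=
          Finset.le_sup (f := fun i => (ch i).cost ψ.ψ (a :: w)) (Finset.mem_univ _)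

theorem eval_eq_of_eqOn_path {Γ : DT k} {r r' : ℕ → Fin (k + 2)}
    (h : ∀ a ∈ Γ.path r, r' a = r a) : Γ.eval r' = Γ.eval r := by
  induction Γ with
  | leaf => rfl
  | node a ch ih =>
    have ha : r' a = r a := h a List.mem_cons_self
    simp only [eval, ha]
    exact ih _ fun b hb => h b (List.mem_cons_of_mem _ hb)

end DT

section UnitRows

variable (ψ : CMeasure) {T : Table k}

theorem exists_isDT_cost_le_setCost_sensitiveAttrs (hT : T.rows = unitRows T.attrs) :
    ∃ Γ : DT k, IsDT T Γ ∧ Γ.cost ψ.ψ [] ≤ ψ.setCost T.sensitiveAttrs := by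
  let l := T.sensitiveAttrs.sort (· ≤ ·)
  refine ⟨DT.chain (T.dec 0) (fun a => T.dec (Pi.single a 1)) l, ⟨fun x hx => ?_, fun r hr => ?_⟩,
    by simpa [l, CMeasure.setCost] using DT.cost_chain_le _ _ ψ l []⟩
  · have hx : x ∈ T.sensitiveAttrs := by simpa [l] using DT.attrSet_chain_subset _ _ l hx
    exact (Finset.mem_filter.1 hx).1
  · rw [hT, mem_unitRows] at hr
    obtain rfl | ⟨a, ha, rfl⟩ := hr
    · exact DT.eval_chain_zero _ _ l
    · rw [DT.eval_chain_single_one]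
      by_cases hdec : T.dec (Pi.single a 1) = T.dec 0 <;>
        simp [l, Table.sensitiveAttrs, ha, hdec]

theorem setCost_sensitiveAttrs_le_cost (hT : T.rows = unitRows T.attrs) {Γ : DT k}
    (hΓ : IsDT T Γ) :
    ψ.setCost T.sensitiveAttrs ≤ Γ.cost ψ.ψ [] := by
  refine (ψ.setCost_le_of_subset fun a ha => ?_).trans (by simpa using DT.le_cost_path ψ Γ 0 [])
  obtain ⟨haT, hdec⟩ := Finset.mem_filter.1 ha
  by_contra hna
  apply hdec
  rw [← hΓ.2 _ (hT ▸ single_one_mem_unitRows haT), ← hΓ.2 0 (hT ▸ zero_mem_unitRows _)]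
  exact DT.eval_eq_of_eqOn_path fun b hb => Pi.single_eq_of_ne (by rintro rfl; exact hna hb) _

theorem psid_eq_setCost_sensitiveAttrs (hT : T.rows = unitRows T.attrs) :
    psid ψ.ψ T = ψ.setCost T.sensitiveAttrs := by
  obtain ⟨Γ, hΓ, hcost⟩ := exists_isDT_cost_le_setCost_sensitiveAttrs ψ hT
  unfold psid
  apply le_antisymm
  · exact le_trans (Nat.sInf_le ⟨Γ, hΓ, rfl⟩) hcost
  · refine le_csInf ⟨_, Γ, hΓ, rfl⟩ ?_
    rintro _ ⟨Γ', hΓ', rfl⟩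
    exact setCost_sensitiveAttrs_le_cost ψ hT hΓ'

def fullRules (T : Table k) : Finset (List (ℕ × Fin (k + 2))) :=
  (T.rows.filter fun r => T.dec r = true).image
    fun r => (T.attrs.sort (· ≤ ·)).map fun a => (a, r a)

theorem isSNDT_fullRules (T : Table k) : IsSNDT T (fullRules T) := by
  refine ⟨?_, fun r hr hdec => ⟨_, Finset.mem_image_of_mem _ (Finset.mem_filter.2 ⟨hr, hdec⟩),
    by simp [RuleSat]⟩, ?_⟩
  · simp only [fullRules, Finset.mem_image, Finset.mem_filter]
    rintro _ ⟨r, -, rfl⟩ p hp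
    obtain ⟨a, ha, rfl⟩ := List.mem_map.1 hp
    exact (Finset.mem_sort _).1 ha
  · simp only [fullRules, Finset.mem_image, Finset.mem_filter]
    rintro _ ⟨r₀, ⟨hr₀, hdec⟩, rfl⟩ r hr hsat
    suffices r = r₀ by rwa [this]
    ext a
    by_cases ha : a ∈ T.attrs
    · simpa using congrArg Fin.val (hsat (a, r₀ a) (by simpa using ha))
    · rw [T.supp r hr a ha, T.supp r₀ hr₀ a ha]

theorem exists_isSNDT_forall_le_psis (ψ : List ℕ → ℕ) (T : Table k) :
    ∃ R, IsSNDT T R ∧ ∀ rule ∈ R, ψ (rule.map Prod.fst) ≤ psis ψ T := by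
  obtain ⟨R, hR, hsup⟩ : ∃ R, IsSNDT T R ∧ R.sup (fun rule => ψ (rule.map Prod.fst)) = psis ψ T :=
    Nat.sInf_mem (s := {m | ∃ R, IsSNDT T R ∧ R.sup (fun rule => ψ (rule.map Prod.fst)) = m})
      ⟨_, _, isSNDT_fullRules T, rfl⟩
  exact ⟨R, hR, fun rule h => hsup ▸ Finset.le_sup (f := fun rule => ψ (rule.map Prod.fst)) h⟩

theorem closedClass_setOf_inClosure {S : Set (Table k)} (hS : S.Nonempty) :
    ClosedClass {T | ∃ T₀ ∈ S, InClosure T T₀} :=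
  ⟨hS.imp fun T₀ h => ⟨T₀, h, inClosure_refl T₀⟩,
    fun _ ⟨T₀, h₀, hT⟩ _ hT' => ⟨T₀, h₀, hT'.trans hT⟩⟩

theorem mem_map_fst_of_not_ruleSat_zero_iff {rule : List (ℕ × Fin (k + 2))} {a : ℕ}
    (h : ¬(RuleSat rule 0 ↔ RuleSat rule (Pi.single a 1))) : a ∈ rule.map Prod.fst := by
  by_contra hna
  refine h (forall₂_congr fun p hp => ?_)
  rw [Pi.single_eq_of_ne (fun hpa => hna (List.mem_map.2 ⟨p, hp, hpa⟩)), Pi.zero_apply]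

theorem setCost_sensitiveAttrs_le_psis (hT : T.rows = unitRows T.attrs) (h0 : T.dec 0 = true) :
    ψ.setCost T.sensitiveAttrs ≤ psis ψ.ψ T := by
  obtain ⟨R, hR, hle⟩ := exists_isSNDT_forall_le_psis ψ.ψ T
  obtain ⟨rule, hrule, hsat⟩ := hR.2.1 0 (hT ▸ zero_mem_unitRows _) h0
  refine (ψ.setCost_le_of_subset fun a ha => ?_).trans (hle rule hrule)
  obtain ⟨haT, hdec⟩ := Finset.mem_filter.1 ha
  refine mem_map_fst_of_not_ruleSat_zero_iff fun hiff => hdec ?_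
  exact (hR.2.2 rule hrule _ (hT ▸ single_one_mem_unitRows haT) (hiff.1 hsat)).trans h0.symm

theorem psi_singleton_le_psis (hT : T.rows = unitRows T.attrs) (h0 : T.dec 0 = false) {a : ℕ}
    (ha : a ∈ T.sensitiveAttrs) : ψ.ψ [a] ≤ psis ψ.ψ T := by
  obtain ⟨R, hR, hle⟩ := exists_isSNDT_forall_le_psis ψ.ψ T
  obtain ⟨haT, hdec⟩ := Finset.mem_filter.1 ha
  obtain ⟨rule, hrule, hsat⟩ :=
    hR.2.1 _ (hT ▸ single_one_mem_unitRows haT) (by simpa [h0] using hdec)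
  have hmem : a ∈ rule.map Prod.fst := mem_map_fst_of_not_ruleSat_zero_iff fun hiff => by
    simpa [h0] using hR.2.2 rule hrule 0 (hT ▸ zero_mem_unitRows _) (hiff.2 hsat)
  calc ψ.ψ [a] = ψ.setCost {a} := (ψ.setCost_singleton a).symm
    _ ≤ ψ.ψ (rule.map Prod.fst) := ψ.setCost_le_of_subset (by simpa using hmem)
    _ ≤ psis ψ.ψ T := hle rule hrule

end UnitRows

theorem psis_unitTable_le (ψ : List ℕ → ℕ) {C : Finset ℕ} {n : ℕ} (h : ∀ a ∈ C, ψ [a] ≤ n) :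
    psis ψ (unitTable (k := k) C) ≤ n := by
  let R := C.image fun a => [(a, (1 : Fin (k + 2)))]
  have hR : IsSNDT (unitTable C) R := by
    refine ⟨by simp [R, unitTable], fun r hr hdec => ?_, ?_⟩
    · obtain rfl | ⟨a, ha, rfl⟩ := mem_unitRows.1 hr
      · simp [unitTable] at hdec
      · exact ⟨_, Finset.mem_image_of_mem _ ha, by simp [RuleSat]⟩
    · simp only [R, Finset.mem_image, RuleSat]
      rintro _ ⟨a, -, rfl⟩ r - hsat
      simpa [unitTable] using fun hr => by simpa [hr] using hsat (a, 1) List.mem_cons_self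
  unfold psis
  exact le_trans (Nat.sInf_le ⟨R, hR, rfl⟩) (Finset.sup_le (by simpa [R] using h))

section Blocks

variable (φ : ℕ → ℕ)

/-- The block of `m` consists of the columns `Nat.pair m i`: `φ m / m` of them of weight `m`,
followed, when `m ∤ φ m`, by one of weight `φ m % m`; so the block has `⌈φ m / m⌉` columns of
total weight `φ m`, each of weight at most `m`. Since `φ 0 / 0 = 0` and `φ 0 % 0 = φ 0`, the
block of `0` is empty when `φ 0 = 0`. -/
def weight (a : ℕ) : ℕ :=
  if a.unpair.2 < φ a.unpair.1 / a.unpair.1 then a.unpair.1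
  else max 1 (φ a.unpair.1 % a.unpair.1)

def block (m : ℕ) : Finset ℕ :=
  (Finset.range (φ m / m + if φ m % m = 0 then 0 else 1)).image (Nat.pair m)

theorem weight_pos (a : ℕ) : 0 < weight φ a := by
  unfold weight
  split_ifs with h
  · exact Nat.pos_of_ne_zero fun h0 => by simp [h0] at h
  · exact lt_of_lt_of_le one_pos (le_max_left _ _)

theorem weight_pair (m i : ℕ) :
    weight φ (Nat.pair m i) = if i < φ m / m then m else max 1 (φ m % m) := by
  simp [weight]

theorem mem_block {m a : ℕ} :
    a ∈ block φ m ↔ ∃ i < φ m / m + (if φ m % m = 0 then 0 else 1), Nat.pair m i = a := by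
  simp [block]

theorem sum_weight_block (m : ℕ) : ∑ a ∈ block φ m, weight φ a = φ m := by
  rw [block, Finset.sum_image fun i _ j _ h => (Nat.pair_eq_pair.1 h).2]
  have hfull : ∑ i ∈ Finset.range (φ m / m), weight φ (Nat.pair m i) = φ m / m * m := by
    rw [Finset.sum_congr rfl fun i hi => by rw [weight_pair, if_pos (Finset.mem_range.1 hi)]]
    simp
  split_ifs with hrem
  · rw [add_zero, hfull]
    simpa [hrem] using Nat.div_add_mod' (φ m) m
  · rw [Finset.sum_range_succ, hfull, weight_pair, if_neg (lt_irrefl _),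
      max_eq_right (Nat.one_le_iff_ne_zero.2 hrem), Nat.div_add_mod']

theorem weight_le_of_mem_block (h0 : φ 0 = 0) {m a : ℕ} (ha : a ∈ block φ m) :
    weight φ a ≤ m := by
  obtain ⟨i, hi, rfl⟩ := (mem_block φ).1 ha
  rcases Nat.eq_zero_or_pos m with rfl | hm
  · simp [h0] at hi
  rw [weight_pair]
  split_ifs with h
  · exact le_rfl
  · have hrem : φ m % m ≠ 0 := fun hrem => by simp [hrem] at hi; omega
    exact max_le (by omega) (Nat.mod_lt _ hm).le

theorem eq_pair_of_mem_block_of_weight_lt {m a : ℕ} (ha : a ∈ block φ m)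
    (hlt : weight φ a < m) :
    a = Nat.pair m (φ m / m) := by
  obtain ⟨i, hi, rfl⟩ := (mem_block φ).1 ha
  rw [weight_pair] at hlt
  split_ifs at hi hlt <;> first | omega | (congr 1; omega)

def blockMeasure : CMeasure := CMeasure.ofWeights (weight φ) (weight_pos φ)

theorem setCost_block (m : ℕ) : (blockMeasure φ).setCost (block φ m) = φ m :=
  (CMeasure.setCost_ofWeights _ _ _).trans (sum_weight_block φ m)

theorem psid_unitTable_block (m : ℕ) :
    psid (blockMeasure φ).ψ (unitTable (k := k) (block φ m)) = φ m := by
  rw [psid_eq_setCost_sensitiveAttrs _ rfl, sensitiveAttrs_unitTable, setCost_block]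

theorem psis_unitTable_block_le (h0 : φ 0 = 0) (m : ℕ) :
    psis (blockMeasure φ).ψ (unitTable (k := k) (block φ m)) ≤ m :=
  psis_unitTable_le _ fun a ha => by
    simpa [blockMeasure] using weight_le_of_mem_block φ h0 ha

theorem psid_le_of_inClosure_of_psis_le (hmono : Monotone φ) (hge : ∀ n, n ≤ φ n) {m n : ℕ}
    {T : Table k} (hT : InClosure T (unitTable (block φ m)))
    (hn : psis (blockMeasure φ).ψ T ≤ n) : psid (blockMeasure φ).ψ T ≤ φ n := by
  set ψ := blockMeasure φ
  have hrows : T.rows = unitRows T.attrs := hT.rows_eq_unitRows rfl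
  have hsub : T.sensitiveAttrs ⊆ block φ m := (Finset.filter_subset _ _).trans hT.1
  rw [psid_eq_setCost_sensitiveAttrs ψ hrows]
  rcases le_or_gt m n with hmn | hnm
  · calc ψ.setCost T.sensitiveAttrs ≤ ψ.setCost (block φ m) := ψ.setCost_mono hsub
      _ = φ m := setCost_block φ m
      _ ≤ φ n := hmono hmn
  refine le_trans ?_ (hge n)
  cases hd : T.dec 0
  · have hlight : T.sensitiveAttrs ⊆ {Nat.pair m (φ m / m)} := fun a ha =>
      Finset.mem_singleton.2 <| eq_pair_of_mem_block_of_weight_lt φ (hsub ha) <| by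
        simpa [ψ, blockMeasure] using
          ((psi_singleton_le_psis ψ hrows hd ha).trans hn).trans_lt hnm
    obtain h | h := Finset.subset_singleton_iff.1 hlight
    · simp [h]
    · rw [h, ψ.setCost_singleton]
      exact (psi_singleton_le_psis ψ hrows hd (h ▸ Finset.mem_singleton_self _)).trans hn
  · exact (setCost_sensitiveAttrs_le_psis ψ hrows hd).trans hn

end Blocks

end

end ClosedClasses

/-- Theorem 5(b): for every nondecreasing `φ : ω → ω` with
`φ(0) = 0` and `φ(n) ≥ n`, there are a bounded complexity measure `ψ` and a
nonempty closed class `A` of decision tables over `E₂` such that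
`F_{ψ,A}(n) = max{ψ^d(T) : T ∈ A, ψ^s(T) ≤ n}` is defined and equals `φ(n)`
for every `n`. -/
theorem exists_class_realizing_phi (φ : ℕ → ℕ) (hmono : Monotone φ)
    (h0 : φ 0 = 0) (hge : ∀ n : ℕ, n ≤ φ n) :
    ∃ ψ : CMeasure, ψ.Bounded ∧ ∃ A : Set (Table 0), ClosedClass A ∧
      ∀ n : ℕ,
        (∀ T ∈ A, psis ψ.ψ T ≤ n → psid ψ.ψ T ≤ φ n) ∧
        (∃ T ∈ A, psis ψ.ψ T ≤ n ∧ psid ψ.ψ T = φ n) := by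
  refine ⟨blockMeasure φ, CMeasure.ofWeights_bounded _ _,
    {T | ∃ T₀ ∈ Set.range fun m => unitTable (block φ m), InClosure T T₀},
    closedClass_setOf_inClosure (Set.range_nonempty _), fun n => ⟨?_, ?_⟩⟩
  · rintro T ⟨_, ⟨m, rfl⟩, hT⟩
    exact psid_le_of_inClosure_of_psis_le φ hmono hge hT
  · exact ⟨unitTable (block φ n), ⟨_, ⟨n, rfl⟩, inClosure_refl _⟩,
      psis_unitTable_block_le φ h0 n, psid_unitTable_block φ n⟩
end

section
/- For any infinite subset D = {n_0 < n_1 < ...} of ω with 0 ∉ D, there exist a bounded complexity measure ψ and a nonempty closed class A of decision tables over E_k such that for all n ∈ ω, F^W_{ψ,A}(n) = F^Θ_{ψ,A}(n) = H_D(n), where H_D(n) = 0 if n < n_0 and H_D(n) = n_i if n_i ≤ n < n_{i+1}. -/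
open ClosedClasses

namespace HDAux

noncomputable section

variable {k : ℕ}

noncomputable instance instDEfun : DecidableEq (ℕ → Fin (k + 2)) := Classical.decEq _

/-- letter cost -/
def cc (i : ℕ) : ℕ := max i 1

lemma one_le_cc (i : ℕ) : 1 ≤ cc i := le_max_right _ _

/-- the additive measure -/
def psiFun (w : List ℕ) : ℕ := (w.map cc).sum

lemma psiFun_nil : psiFun [] = 0 := rfl

lemma psiFun_cons (a : ℕ) (w : List ℕ) : psiFun (a :: w) = cc a + psiFun w := rfl

lemma length_le_psiFun (w : List ℕ) : w.length ≤ psiFun w := by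
  induction w with
  | nil => simp [psiFun]
  | cons a t ih =>
    rw [psiFun_cons]
    have := one_le_cc a
    simp only [List.length_cons]
    omega

noncomputable def psiM : CMeasure where
  ψ := psiFun
  pos w := by
    constructor
    · intro h
      cases w with
      | nil => rfl
      | cons a t =>
        rw [psiFun_cons] at h
        have := one_le_cc a
        omega
    · rintro rfl; rfl
  perm w w' h := by
    unfold psiFun
    exact List.Perm.sum_eq (h.map _)
  mono w₁ w₂ := by
    unfold psiFun
    simp only [List.map_append, List.sum_append]
    exact Nat.le_add_right _ _
  subadd w₁ w₂ := by
    unfold psiFun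
    simp [List.map_append, List.sum_append]

lemma psiM_bounded : psiM.Bounded := fun w => length_le_psiFun w

lemma setCost_empty : psiM.setCost ∅ = 0 := by
  simp [CMeasure.setCost, psiM, psiFun]

lemma setCost_singleton (i : ℕ) : psiM.setCost {i} = cc i := by
  simp [CMeasure.setCost, psiM, psiFun]

/-- the all-zero row -/
def r0 : ℕ → Fin (k + 2) := fun _ => 0

/-- the row that is 1 at `i` and 0 elsewhere -/
def r1 (i : ℕ) : ℕ → Fin (k + 2) := fun a => if a = i then 1 else 0

lemma zero_ne_one' : (0 : Fin (k + 2)) ≠ 1 := by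
  intro h
  have := congrArg Fin.val h
  simp [Fin.val_zero, Fin.val_one] at this

lemma r0_ne_r1 (i : ℕ) : (r0 : ℕ → Fin (k + 2)) ≠ r1 i := by
  intro h
  have := congrFun h i
  simp [r0, r1] at this

lemma restrict_r0 (A : Finset ℕ) : restrict A (r0 : ℕ → Fin (k + 2)) = r0 := by
  funext a; simp [restrict, r0]

lemma restrict_empty_r1 (i : ℕ) :
    restrict (∅ : Finset ℕ) (r1 i : ℕ → Fin (k + 2)) = r0 := by
  funext a; simp [restrict, r0]

lemma restrict_singleton_r1 (i : ℕ) :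
    restrict ({i} : Finset ℕ) (r1 i : ℕ → Fin (k + 2)) = r1 i := by
  funext a
  by_cases h : a = i
  · simp [restrict, r1, h]
  · simp [restrict, r1, h]

/-- the empty-attributes table -/
def T0 (dec : (ℕ → Fin (k + 2)) → Bool) : Table k where
  attrs := ∅
  rows := {r0}
  dec := dec
  supp := by
    intro r hr a _
    simp only [Finset.mem_singleton] at hr
    subst hr; rfl

/-- the one-column table on attribute `i` -/
def Ti (i : ℕ) (dec : (ℕ → Fin (k + 2)) → Bool) : Table k where
  attrs := {i}
  rows := {r0, r1 i}
  dec := dec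
  supp := by
    intro r hr a ha
    simp only [Finset.mem_insert, Finset.mem_singleton] at hr
    simp only [Finset.mem_singleton] at ha
    rcases hr with rfl | rfl
    · rfl
    · simp [r1, ha]

/-- the closed class -/
def Acl (D : Set ℕ) : Set (Table k) :=
  {T | (T.attrs = ∅ ∧ T.rows = {r0}) ∨
    ∃ i ∈ D, T.attrs = {i} ∧ T.rows = {r0, r1 i}}

lemma T0_mem (D : Set ℕ) (dec : (ℕ → Fin (k + 2)) → Bool) :
    (T0 dec : Table k) ∈ Acl D := Or.inl ⟨rfl, rfl⟩

lemma Ti_mem (D : Set ℕ) {i : ℕ} (hi : i ∈ D) (dec : (ℕ → Fin (k + 2)) → Bool) :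
    (Ti i dec : Table k) ∈ Acl D := Or.inr ⟨i, hi, rfl, rfl⟩

lemma Acl_closed (D : Set ℕ) (hD : D.Nonempty) : ClosedClass (Acl (k := k) D) := by
  obtain ⟨i, hi⟩ := hD
  constructor
  · exact ⟨Ti i (fun _ => false), Ti_mem D hi _⟩
  · rintro T hT T' ⟨hsub, hrows⟩
    rcases hT with ⟨ha, hr⟩ | ⟨i, hi, ha, hr⟩
    · left
      have hA : T'.attrs = ∅ := Finset.subset_empty.mp (ha ▸ hsub)
      refine ⟨hA, ?_⟩
      apply Finset.coe_injective
      rw [hrows, hr]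
      simp [restrict_r0]
    · rw [ha] at hsub
      rcases Finset.subset_singleton_iff.mp hsub with hA | hA
      · left
        refine ⟨hA, ?_⟩
        apply Finset.coe_injective
        rw [hrows, hr, hA]
        simp only [Finset.coe_insert, Finset.coe_singleton, Set.image_insert_eq,
          Set.image_singleton, restrict_r0, restrict_empty_r1]
        simp
      · right
        refine ⟨i, hi, hA, ?_⟩
        apply Finset.coe_injective
        rw [hrows, hr, hA]
        simp only [Finset.coe_insert, Finset.coe_singleton, Set.image_insert_eq,
          Set.image_singleton, restrict_r0, restrict_singleton_r1]

/-- any tree's cost is at least the cost of the accumulator -/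
lemma le_cost (Γ : DT k) : ∀ w : List ℕ, psiFun w ≤ Γ.cost psiFun w := by
  induction Γ with
  | leaf b => intro w; simp [DT.cost]
  | node a ch ih =>
    intro w
    have h1 : psiFun w ≤ psiFun (a :: w) := by
      rw [psiFun_cons]; omega
    have h2 : psiFun (a :: w) ≤ (ch 0).cost psiFun (a :: w) := ih 0 (a :: w)
    calc psiFun w ≤ (ch 0).cost psiFun (a :: w) := le_trans h1 h2
      _ ≤ _ := Finset.le_sup (f := fun i => (ch i).cost psiFun (a :: w))
        (Finset.mem_univ (0 : Fin (k + 2)))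

/-- tables with constant decisions have `psid = 0` -/
lemma psid_zero_of_const (T : Table k) (b : Bool) (hb : ∀ r ∈ T.rows, T.dec r = b) :
    psid psiFun T = 0 := by
  apply Nat.sInf_eq_zero.mpr
  left
  refine ⟨DT.leaf b, ⟨Finset.empty_subset _, fun r hr => (hb r hr).symm⟩, rfl⟩

lemma mem_rows_Ti {T : Table k} {i : ℕ} (hr : T.rows = {r0, r1 i})
    {r : ℕ → Fin (k + 2)} (h : r ∈ T.rows) : r = r0 ∨ r = r1 i := by
  rw [hr] at h
  simpa using h

lemma r0_mem {T : Table k} {i : ℕ} (hr : T.rows = {r0, r1 i}) :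
    (r0 : ℕ → Fin (k + 2)) ∈ T.rows := by rw [hr]; simp

lemma r1_mem {T : Table k} {i : ℕ} (hr : T.rows = {r0, r1 i}) :
    (r1 i : ℕ → Fin (k + 2)) ∈ T.rows := by rw [hr]; simp

/-- the one-attribute table with nonconstant decisions has `psid = cc i` -/
lemma psid_Ti (T : Table k) (i : ℕ) (ha : T.attrs = {i}) (hr : T.rows = {r0, r1 i})
    (hne : T.dec r0 ≠ T.dec (r1 i)) : psid psiFun T = cc i := by
  have r0i : (r0 : ℕ → Fin (k + 2)) i = 0 := rfl
  have r1i : (r1 i : ℕ → Fin (k + 2)) i = 1 := by simp [r1]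
  set Γ : DT k := DT.node i (fun v => if v = 0 then DT.leaf (T.dec r0)
    else DT.leaf (T.dec (r1 i))) with hΓ
  have hmem : cc i ∈ {m | ∃ Γ : DT k, IsDT T Γ ∧ Γ.cost psiFun [] = m} := by
    refine ⟨Γ, ⟨?_, ?_⟩, ?_⟩
    · intro a haa
      rw [ha]
      simp only [hΓ, DT.attrSet, Finset.mem_insert, Finset.mem_biUnion] at haa
      rcases haa with rfl | ⟨v, _, hv⟩
      · simp
      · by_cases h : v = 0 <;> simp [h, DT.attrSet] at hv
    · intro r hrr
      rcases mem_rows_Ti hr hrr with rfl | rfl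
      · simp [hΓ, DT.eval, r0i]
      · simp [hΓ, DT.eval, r1i, (zero_ne_one' (k := k)).symm]
    · have this : ∀ v : Fin (k + 2),
          DT.cost (k := k) psiFun (if v = 0 then DT.leaf (T.dec r0)
            else DT.leaf (T.dec (r1 i))) [i] = cc i := by
        intro v
        by_cases h : v = 0 <;> simp [h, DT.cost, psiFun]
      simp only [hΓ, DT.cost]
      rw [Finset.sup_congr rfl (fun v _ => this v)]
      rw [Finset.sup_const Finset.univ_nonempty]
  have hlow : ∀ m ∈ {m | ∃ Γ : DT k, IsDT T Γ ∧ Γ.cost psiFun [] = m}, cc i ≤ m := by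
    rintro m ⟨Γ', ⟨hsub, hev⟩, rfl⟩
    cases Γ' with
    | leaf b =>
      exfalso
      have h1 := hev r0 (r0_mem hr)
      have h2 := hev (r1 i) (r1_mem hr)
      simp [DT.eval] at h1 h2
      exact hne (h1 ▸ h2 ▸ rfl)
    | node a ch =>
      have hai : a = i := by
        have : a ∈ T.attrs := hsub (by simp [DT.attrSet])
        rw [ha] at this
        simpa using this
      subst hai
      have h1 : psiFun [a] ≤ (ch 0).cost psiFun [a] := le_cost _ _
      have h2 : (ch 0).cost psiFun [a] ≤ (DT.node a ch).cost psiFun [] :=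
        Finset.le_sup (f := fun v => (ch v).cost psiFun (a :: []))
          (Finset.mem_univ (0 : Fin (k + 2)))
      have : psiFun [a] = cc a := by simp [psiFun]
      omega
  refine le_antisymm (Nat.sInf_le hmem) ?_
  have hnemp : {m | ∃ Γ : DT k, IsDT T Γ ∧ Γ.cost psiFun [] = m}.Nonempty := ⟨_, hmem⟩
  exact hlow _ (Nat.sInf_mem hnemp)

/-- `thetapsi = 0` for tables whose decisions are constant on the rows -/
lemma thetapsi_zero_of_const (T : Table k)
    (hc : ∀ r ∈ T.rows, ∀ r' ∈ T.rows, T.dec r = T.dec r') :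
    T.thetapsi psiM = 0 := by
  apply Nat.sInf_eq_zero.mpr
  left
  refine ⟨∅, ⟨Finset.empty_subset _, ?_⟩, setCost_empty⟩
  intro r hrr r' hrr' hd
  exact absurd (hc r hrr r' hrr') hd

lemma thetapsi_Ti (T : Table k) (i : ℕ) (ha : T.attrs = {i}) (hr : T.rows = {r0, r1 i})
    (hne : T.dec r0 ≠ T.dec (r1 i)) : T.thetapsi psiM = cc i := by
  have r01 : (r0 : ℕ → Fin (k + 2)) i ≠ (r1 i) i := by
    simp [r0, r1]
  have htest : T.IsTest {i} := by
    refine ⟨by rw [ha], ?_⟩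
    intro r hrr r' hrr' hd
    rcases mem_rows_Ti hr hrr with rfl | rfl <;>
      rcases mem_rows_Ti hr hrr' with rfl | rfl
    · exact absurd rfl hd
    · exact ⟨i, by simp, r01⟩
    · exact ⟨i, by simp, r01.symm⟩
    · exact absurd rfl hd
  have hmem : cc i ∈ {m | ∃ E : Finset ℕ, T.IsTest E ∧ psiM.setCost E = m} :=
    ⟨{i}, htest, setCost_singleton i⟩
  have hlow : ∀ m ∈ {m | ∃ E : Finset ℕ, T.IsTest E ∧ psiM.setCost E = m},
      cc i ≤ m := by
    rintro m ⟨E, ⟨hEsub, hE⟩, rfl⟩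
    obtain ⟨a, haE, hane⟩ := hE r0 (r0_mem hr) (r1 i) (r1_mem hr) hne
    have hai : a = i := by
      by_contra hcon
      apply hane
      simp [r0, r1, hcon]
    have : E = {i} := by
      rw [ha] at hEsub
      rcases Finset.subset_singleton_iff.mp hEsub with rfl | h
      · exact absurd haE (by simp)
      · exact h
    rw [this, setCost_singleton]
  refine le_antisymm (Nat.sInf_le hmem) ?_
  exact hlow _ (Nat.sInf_mem ⟨_, hmem⟩)

lemma cc_of_memD {D : Set ℕ} (h0 : 0 ∉ D) {i : ℕ} (hi : i ∈ D) : cc i = i := by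
  have : i ≠ 0 := fun h => h0 (h ▸ hi)
  unfold cc; omega

lemma HD_bdd (D : Set ℕ) (n : ℕ) : BddAbove (D ∩ Set.Iic n) :=
  ⟨n, fun _ hx => hx.2⟩

end

end HDAux

open HDAux in
/-- Theorem 3: for any infinite `D ⊆ ω` with `0 ∉ D`, there are
a bounded complexity measure `ψ` and a nonempty closed class `A` such that
`F^W_{ψ,A}(n) = F^Θ_{ψ,A}(n) = H_D(n)` for all `n`, where `H_D(n)` is the
largest element of `D` not exceeding `n` (and `0` if none exists). -/
theorem exists_class_realizing_HD (k : ℕ) (D : Set ℕ) (hinf : D.Infinite)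
    (h0 : 0 ∉ D) :
    ∃ ψ : CMeasure, ψ.Bounded ∧ ∃ A : Set (Table k), ClosedClass A ∧
      ∀ n : ℕ,
        (∀ T ∈ A, T.Wpsi ψ ≤ n → psid ψ.ψ T ≤ HD D n) ∧
        (∃ T ∈ A, T.Wpsi ψ ≤ n ∧ psid ψ.ψ T = HD D n) ∧
        (∀ T ∈ A, T.thetapsi ψ ≤ n → psid ψ.ψ T ≤ HD D n) ∧
        (∃ T ∈ A, T.thetapsi ψ ≤ n ∧ psid ψ.ψ T = HD D n) := by
  refine ⟨psiM, psiM_bounded, Acl D, Acl_closed D hinf.nonempty, fun n => ?_⟩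
  have hψ : (psiM : CMeasure).ψ = psiFun := rfl
  -- upper bound, used for both parts
  have hub : ∀ T ∈ Acl (k := k) D,
      (T.Wpsi psiM ≤ n ∨ T.thetapsi psiM ≤ n) → psid psiM.ψ T ≤ HD D n := by
    rintro T hT hn
    rcases hT with ⟨ha, hr⟩ | ⟨i, hi, ha, hr⟩
    · have : psid psiM.ψ T = 0 := by
        rw [hψ]
        refine psid_zero_of_const T (T.dec r0) ?_
        intro r hrr
        rw [hr] at hrr
        simp only [Finset.mem_singleton] at hrr
        rw [hrr]
      simp [this]
    · by_cases hc : T.dec r0 = T.dec (r1 i)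
      · have : psid psiM.ψ T = 0 := by
          rw [hψ]
          refine psid_zero_of_const T (T.dec r0) ?_
          intro r hrr
          rcases mem_rows_Ti hr hrr with rfl | rfl
          · rfl
          · exact hc.symm
        simp [this]
      · have hcc : cc i = i := cc_of_memD h0 hi
        have hpsid : psid psiM.ψ T = i := by rw [hψ, psid_Ti T i ha hr hc, hcc]
        have hWl : T.Wpsi psiM = i := by
          unfold Table.Wpsi
          rw [ha, setCost_singleton, hcc]
        have hTl : T.thetapsi psiM = i := by rw [thetapsi_Ti T i ha hr hc, hcc]
        have hin : i ≤ n := by rcases hn with hn | hn <;> omega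
        rw [hpsid]
        exact le_csSup (HD_bdd D n) ⟨hi, hin⟩
  -- existence witness
  have hex : ∃ T ∈ Acl (k := k) D, T.Wpsi psiM ≤ n ∧ T.thetapsi psiM ≤ n ∧
      psid psiM.ψ T = HD D n := by
    by_cases hne : (D ∩ Set.Iic n).Nonempty
    · set m := HD D n with hm
      have hmmem : m ∈ D ∩ Set.Iic n := Nat.sSup_mem hne (HD_bdd D n)
      have hmD : m ∈ D := hmmem.1
      have hmn : m ≤ n := hmmem.2
      have hcc : cc m = m := cc_of_memD h0 hmD
      refine ⟨Ti m (fun r => decide (r m = 1)), Ti_mem D hmD _, ?_, ?_, ?_⟩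
      · unfold Table.Wpsi
        show psiM.setCost {m} ≤ n
        rw [setCost_singleton, hcc]; exact hmn
      · have hd : (Ti (k := k) m (fun r => decide (r m = 1))).dec r0 ≠
            (Ti (k := k) m (fun r => decide (r m = 1))).dec (r1 m) := by
          simp [Ti, r0, r1, (zero_ne_one' (k := k))]
        rw [thetapsi_Ti _ m rfl rfl hd, hcc]; exact hmn
      · have hd : (Ti (k := k) m (fun r => decide (r m = 1))).dec r0 ≠
            (Ti (k := k) m (fun r => decide (r m = 1))).dec (r1 m) := by
          simp [Ti, r0, r1, (zero_ne_one' (k := k))]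
        rw [hψ, psid_Ti _ m rfl rfl hd, hcc]
    · have hHD : HD D n = 0 := by
        rw [Set.not_nonempty_iff_eq_empty] at hne
        unfold HD
        rw [hne]
        exact csSup_empty
      refine ⟨T0 (fun _ => false), T0_mem D _, ?_, ?_, ?_⟩
      · unfold Table.Wpsi
        show psiM.setCost ∅ ≤ n
        rw [setCost_empty]; omega
      · have : (T0 (k := k) (fun _ => false)).thetapsi psiM = 0 := by
          apply thetapsi_zero_of_const
          intro r hrr r' hrr'
          rfl
        omega
      · rw [hψ, hHD]
        refine psid_zero_of_const _ false fun r _ => rfl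
  obtain ⟨T, hT, hW, hΘ, hps⟩ := hex
  exact ⟨fun T' hT' h => hub T' hT' (Or.inl h), ⟨T, hT, hW, hps⟩,
    fun T' hT' h => hub T' hT' (Or.inr h), ⟨T, hT, hΘ, hps⟩⟩
end
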